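/- arXiv:2512.07406 — 3 statements merged into one kernel-verified Lean document; each statement's English description precedes it below -/
import Mathlib

section
/- Let 𝒫₁ and 𝒫₀ be real n_p × n_q matrices, let h ∈ ℝ, let I₁ᵖ, I₀ᵖ be real N × M matrices and I₁ᵠ, I₀ᵠ be real M × N matrices satisfying I₁ᵖ = −(I₁ᵠ)ᵀ and I₀ᵖ = (I₀ᵠ)ᵀ. Define the Kronecker-product matrices P_dp = I₁ᵖ ⊗ 𝒫₁ + h·(I₀ᵖ ⊗ 𝒫₀) and P_dq = I₁ᵠ ⊗ 𝒫₁ᵀ − h·(I₀ᵠ ⊗ 𝒫₀ᵀ). Then P_dp = −(P_dq)ᵀ, and consequently the block matrix J_d with blocks [[0, P_dp], [P_dq, 0]] is skew-symmetric. -/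
open Matrix Kronecker

/-- Skew-symmetry of the discretized interconnection structure for the 1D
staggered-grid scheme: if the connection-coefficient matrices satisfy
`I₁ᵖ = -(I₁ᵠ)ᵀ` and `I₀ᵖ = (I₀ᵠ)ᵀ`, then `P_dp = -(P_dq)ᵀ` and the block matrix
`[[0, P_dp], [P_dq, 0]]` is skew-symmetric. -/
theorem discrete_structure_skew_1D
    (np nq N M : ℕ) (P1 P0 : Matrix (Fin np) (Fin nq) ℝ) (h : ℝ)
    (I1p I0p : Matrix (Fin N) (Fin M) ℝ) (I1q I0q : Matrix (Fin M) (Fin N) ℝ)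
    (h1 : I1p = -I1qᵀ) (h0 : I0p = I0qᵀ) :
    let Pdp : Matrix (Fin N × Fin np) (Fin M × Fin nq) ℝ :=
      I1p ⊗ₖ P1 + h • (I0p ⊗ₖ P0)
    let Pdq : Matrix (Fin M × Fin nq) (Fin N × Fin np) ℝ :=
      I1q ⊗ₖ P1ᵀ - h • (I0q ⊗ₖ P0ᵀ)
    Pdp = -Pdqᵀ ∧
      (Matrix.fromBlocks 0 Pdp Pdq 0)ᵀ = -(Matrix.fromBlocks 0 Pdp Pdq 0) := by
  intro Pdp Pdq
  have key : Pdp = -Pdqᵀ := by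
    simp only [Pdp, Pdq, h1, h0, transpose_sub, transpose_smul,
      Matrix.kroneckerMap_transpose, transpose_transpose]
    ext ⟨i, j⟩ ⟨k, l⟩
    simp [Matrix.kroneckerMap_apply, Matrix.neg_apply, Matrix.add_apply,
      Matrix.sub_apply, Matrix.smul_apply]
    ring
  refine ⟨key, ?_⟩
  rw [Matrix.fromBlocks_transpose]
  have key2 : Pdqᵀ = -Pdp := by rw [key]; simp
  rw [key2, show Pdpᵀ = -Pdq by rw [key]; simp]
  ext i j
  cases i <;> cases j <;> simp [Matrix.fromBlocks]
end

section
/- Let 𝒫₁, 𝒫₂, 𝒫₀ be real n_p × n_q matrices, let h₁, h₂ ∈ ℝ, let I₁ᵖ, I₂ᵖ, I₀ᵖ be real N × M matrices and I₁ᵠ, I₂ᵠ, I₀ᵠ be real M × N matrices satisfying I₁ᵖ = −(I₁ᵠ)ᵀ, I₂ᵖ = −(I₂ᵠ)ᵀ and I₀ᵖ = (I₀ᵠ)ᵀ. Define P_dp = h₂·(I₁ᵖ ⊗ 𝒫₁) + h₁·(I₂ᵖ ⊗ 𝒫₂) + h₁h₂·(I₀ᵖ ⊗ 𝒫₀) and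 P_dq = h₂·(I₁ᵠ ⊗ 𝒫₁ᵀ) + h₁·(I₂ᵠ ⊗ 𝒫₂ᵀ) − h₁h₂·(I₀ᵠ ⊗ 𝒫₀ᵀ). Then P_dp = −(P_dq)ᵀ, and consequently the block matrix with blocks [[0, P_dp], [P_dq, 0]] is skew-symmetric. -/
open Matrix Kronecker

/-- Skew-symmetry of the discretized interconnection structure for the 2D
staggered-grid scheme on a rectangular grid with half-spacings `h₁, h₂`:
if the connection-coefficient matrices satisfy `Iᵢᵖ = -(Iᵢᵠ)ᵀ` for `i = 1, 2` and
`I₀ᵖ = (I₀ᵠ)ᵀ`, then `P_dp = -(P_dq)ᵀ` and the block matrix `[[0, P_dp], [P_dq, 0]]`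
is skew-symmetric. -/
theorem discrete_structure_skew_2D
    (np nq N M : ℕ) (P1 P2 P0 : Matrix (Fin np) (Fin nq) ℝ) (h₁ h₂ : ℝ)
    (I1p I2p I0p : Matrix (Fin N) (Fin M) ℝ)
    (I1q I2q I0q : Matrix (Fin M) (Fin N) ℝ)
    (hI1 : I1p = -I1qᵀ) (hI2 : I2p = -I2qᵀ) (hI0 : I0p = I0qᵀ) :
    let Pdp : Matrix (Fin N × Fin np) (Fin M × Fin nq) ℝ :=
      h₂ • (I1p ⊗ₖ P1) + h₁ • (I2p ⊗ₖ P2) + (h₁ * h₂) • (I0p ⊗ₖ P0)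
    let Pdq : Matrix (Fin M × Fin nq) (Fin N × Fin np) ℝ :=
      h₂ • (I1q ⊗ₖ P1ᵀ) + h₁ • (I2q ⊗ₖ P2ᵀ) - (h₁ * h₂) • (I0q ⊗ₖ P0ᵀ)
    Pdp = -Pdqᵀ ∧
      (Matrix.fromBlocks 0 Pdp Pdq 0)ᵀ = -(Matrix.fromBlocks 0 Pdp Pdq 0) := by
  intro Pdp Pdq
  have key : Pdp = -Pdqᵀ := by
    simp only [Pdp, Pdq, hI1, hI2, hI0, transpose_sub, transpose_add,
      transpose_smul, Matrix.kroneckerMap_transpose, transpose_transpose]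
    ext ⟨i, j⟩ ⟨k, l⟩
    simp [Matrix.kroneckerMap_apply]
    ring
  refine ⟨key, ?_⟩
  ext ⟨i, j⟩ ⟨k, l⟩ <;>
    simp [Matrix.fromBlocks, key, Matrix.transpose_apply]
end

section
/- Let 𝒫₁, 𝒫₀ be real n_p × n_q matrices, let Q_p be a symmetric real n_p × n_p matrix and Q_q a symmetric real n_q × n_q matrix, and let a < b. Let p : ℝ × [a, b] → ℝ^{n_p} and q : ℝ × [a, b] → ℝ^{n_q} be continuously differentiable, set e_p = Q_p·p and e_q = Q_q·q, and suppose that on ℝ × [a, b]: ∂p/∂t = 𝒫₁·∂e_q/∂ξ + 𝒫₀·e_q and ∂q/∂t = 𝒫₁ᵀ·∂e_p/∂ξ − 𝒫₀ᵀ·e_p. Then the energy H(t) = (1/2)·∫_a^b [p(t,ξ)ᵀ·Q_p·p(t,ξ) + q(t,ξ)ᵀ·Q_q·q(t,ξ)] dξ is differentiable in t and dH/dt (t) = e_p(t,b)ᵀ·𝒫₁·e_q(t,b) − e_p(t,a)ᵀ·𝒫₁·e_q(t,a). -/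
/-!
The energy density `ℋ = ½ (pᵀ Q_p p + qᵀ Q_q q)` obeys the local conservation law
`∂ₜℋ = ∂_ξ (e_pᵀ 𝒫₁ e_q)`. Symmetry of `Q_p`, `Q_q` gives `∂ₜℋ = e_p ⬝ ∂ₜp + e_q ⬝ ∂ₜq`;
inserting the dynamics, the `𝒫₀`-terms cancel because the block operator `P₀` is
skew-symmetric, and the `𝒫₁`-terms are exactly the product rule for `∂_ξ (e_pᵀ 𝒫₁ e_q)`.
Differentiating under the integral sign and applying the fundamental theorem of calculus in `ξ`
turns the conservation law into the boundary balance.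
-/

open Matrix

theorem portHamiltonian_power_identity {R m n : Type*} [CommRing R] [Fintype m] [Fintype n]
    (P₁ P₀ : Matrix m n R) (ep epξ : m → R) (eq eqξ : n → R) :
    ep ⬝ᵥ (P₁ *ᵥ eqξ + P₀ *ᵥ eq) + eq ⬝ᵥ (P₁ᵀ *ᵥ epξ - P₀ᵀ *ᵥ ep) =
      epξ ⬝ᵥ P₁ *ᵥ eq + ep ⬝ᵥ P₁ *ᵥ eqξ := by
  rw [dotProduct_add, dotProduct_sub, dotProduct_transpose_mulVec, dotProduct_transpose_mulVec]
  ring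

section Calculus

variable {n : Type*} [Fintype n] {E : Type*} [NormedAddCommGroup E] [NormedSpace ℝ E]

theorem HasDerivAt.matrix_mulVec {m : Type*} [Fintype m] (A : Matrix m n ℝ) {v : ℝ → n → ℝ}
    {v' : n → ℝ} {t : ℝ} (hv : HasDerivAt v v' t) :
    HasDerivAt (fun s => A *ᵥ v s) (A *ᵥ v') t :=
  (mulVecLin A).toContinuousLinearMap.hasFDerivAt.comp_hasDerivAt t hv

theorem HasDerivAt.dotProduct {u v : ℝ → n → ℝ} {u' v' : n → ℝ} {t : ℝ}
    (hu : HasDerivAt u u' t) (hv : HasDerivAt v v' t) :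
    HasDerivAt (fun s => u s ⬝ᵥ v s) (u' ⬝ᵥ v t + u t ⬝ᵥ v') t := by
  have h : HasDerivAt (fun s => ∑ i, u s i * v s i) (∑ i, (u' i * v t i + u t i * v' i)) t :=
    .fun_sum fun i _ => (hasDerivAt_pi.mp hu i).mul (hasDerivAt_pi.mp hv i)
  exact h.congr_deriv Finset.sum_add_distrib

theorem HasDerivAt.dotProduct_mulVec_self {Q : Matrix n n ℝ} (hQ : Q.IsSymm) {u : ℝ → n → ℝ}
    {u' : n → ℝ} {t : ℝ} (hu : HasDerivAt u u' t) :
    HasDerivAt (fun s => u s ⬝ᵥ Q *ᵥ u s) (2 * (Q *ᵥ u t ⬝ᵥ u')) t := by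
  have hsymm : u t ⬝ᵥ Q *ᵥ u' = u' ⬝ᵥ Q *ᵥ u t := by
    rw [← dotProduct_transpose_mulVec, hQ.eq]
  refine (hu.dotProduct (hu.matrix_mulVec Q)).congr_deriv ?_
  rw [hsymm, dotProduct_comm u', two_mul]

theorem ContDiff.matrix_mulVec {m : Type*} [Fintype m] (A : Matrix m n ℝ) {v : E → n → ℝ}
    {k : WithTop ℕ∞} (hv : ContDiff ℝ k v) : ContDiff ℝ k fun x => A *ᵥ v x :=
  (mulVecLin A).toContinuousLinearMap.contDiff.comp hv

theorem ContDiff.dotProduct {u v : E → n → ℝ} {k : WithTop ℕ∞} (hu : ContDiff ℝ k u)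
    (hv : ContDiff ℝ k v) : ContDiff ℝ k fun x => u x ⬝ᵥ v x :=
  ContDiff.sum fun i _ => (contDiff_pi.mp hu i).mul (contDiff_pi.mp hv i)

theorem ContDiff.differentiable_comp_prodMk_left {f : ℝ × ℝ → E} (hf : ContDiff ℝ 1 f) (ξ : ℝ) :
    Differentiable ℝ fun s => f (s, ξ) :=
  (hf.differentiable one_ne_zero).comp (differentiable_id.prodMk (differentiable_const ξ))

theorem ContDiff.differentiable_comp_prodMk_right {f : ℝ × ℝ → E} (hf : ContDiff ℝ 1 f) (t : ℝ) :
    Differentiable ℝ fun ζ => f (t, ζ) :=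
  (hf.differentiable one_ne_zero).comp ((differentiable_const t).prodMk differentiable_id)

theorem ContDiff.deriv_comp_prodMk_left {f : ℝ × ℝ → E} (hf : ContDiff ℝ 1 f) (s ξ : ℝ) :
    deriv (fun s => f (s, ξ)) s = fderiv ℝ f (s, ξ) (1, 0) :=
  ((hf.differentiable one_ne_zero (s, ξ)).hasFDerivAt.comp_hasDerivAt s
    ((hasDerivAt_id s).prodMk (hasDerivAt_const s ξ))).deriv

theorem ContDiff.continuous_deriv_comp_prodMk_left {f : ℝ × ℝ → E} (hf : ContDiff ℝ 1 f) :
    Continuous fun x : ℝ × ℝ => deriv (fun s => f (s, x.2)) x.1 := by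
  simp only [hf.deriv_comp_prodMk_left]
  exact (hf.continuous_fderiv one_ne_zero).clm_apply continuous_const

theorem hasDerivAt_intervalIntegral_of_contDiff {f : ℝ × ℝ → E} (hf : ContDiff ℝ 1 f)
    (a b t : ℝ) :
    HasDerivAt (fun s => ∫ ξ in a..b, f (s, ξ)) (∫ ξ in a..b, deriv (fun s => f (s, ξ)) t) t := by
  have hslice : ∀ s, Continuous fun ξ => f (s, ξ) := fun s => by fun_prop
  have hK : IsCompact (Metric.closedBall t 1 ×ˢ Set.uIcc a b) :=
    (isCompact_closedBall t 1).prod isCompact_uIcc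
  obtain ⟨C, hC⟩ :=
    hK.exists_bound_of_continuousOn hf.continuous_deriv_comp_prodMk_left.continuousOn
  exact (intervalIntegral.hasDerivAt_integral_of_dominated_loc_of_deriv_le
    (F := fun s ξ => f (s, ξ)) (bound := fun _ => C) (Metric.ball_mem_nhds t one_pos)
    (.of_forall fun s => (hslice s).aestronglyMeasurable) ((hslice t).intervalIntegrable a b)
    (hf.continuous_deriv_comp_prodMk_left.comp (Continuous.prodMk_right t)).aestronglyMeasurable
    (.of_forall fun ξ hξ s hs =>
      hC (s, ξ) ⟨Metric.ball_subset_closedBall hs, Set.uIoc_subset_uIcc hξ⟩)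
    intervalIntegrable_const
    (.of_forall fun ξ _ s _ => (hf.differentiable_comp_prodMk_left ξ s).hasDerivAt)).2

theorem hasDerivAt_intervalIntegral_of_conservationLaw [CompleteSpace E] {ρ : ℝ × ℝ → E}
    (hρ : ContDiff ℝ 1 ρ) {Φ : ℝ → E} {a b t : ℝ}
    (hΦ : ∀ ξ ∈ Set.uIcc a b, HasDerivAt Φ (deriv (fun s => ρ (s, ξ)) t) ξ) :
    HasDerivAt (fun s => ∫ ξ in a..b, ρ (s, ξ)) (Φ b - Φ a) t := by
  rw [← intervalIntegral.integral_eq_sub_of_hasDerivAt hΦ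
    ((hρ.continuous_deriv_comp_prodMk_left.comp (Continuous.prodMk_right t)).intervalIntegrable
      a b)]
  exact hasDerivAt_intervalIntegral_of_contDiff hρ a b t

end Calculus

/-- Energy balance of a linear 1D port-Hamiltonian system on `[a, b]` with quadratic
Hamiltonian density: under the dynamics `∂p/∂t = 𝒫₁ ∂e_q/∂ξ + 𝒫₀ e_q`,
`∂q/∂t = 𝒫₁ᵀ ∂e_p/∂ξ - 𝒫₀ᵀ e_p` with co-energy variables `e_p = Q_p p`, `e_q = Q_q q`,
the time derivative of the total energy is given purely by boundary terms:
`dH/dt = e_p(t,b)ᵀ 𝒫₁ e_q(t,b) - e_p(t,a)ᵀ 𝒫₁ e_q(t,a)`. -/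
theorem pH_1D_energy_balance
    (np nq : ℕ) (P1 P0 : Matrix (Fin np) (Fin nq) ℝ)
    (Qp : Matrix (Fin np) (Fin np) ℝ) (hQp : Qp.IsSymm)
    (Qq : Matrix (Fin nq) (Fin nq) ℝ) (hQq : Qq.IsSymm)
    (a b : ℝ) (hab : a < b)
    (p : ℝ × ℝ → Fin np → ℝ) (q : ℝ × ℝ → Fin nq → ℝ)
    (hp : ContDiff ℝ 1 p) (hq : ContDiff ℝ 1 q)
    (ep : ℝ → ℝ → Fin np → ℝ) (eq' : ℝ → ℝ → Fin nq → ℝ)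
    (hep : ∀ t ξ, ep t ξ = Qp.mulVec (p (t, ξ)))
    (heq : ∀ t ξ, eq' t ξ = Qq.mulVec (q (t, ξ)))
    (hpde_p : ∀ t : ℝ, ∀ ξ ∈ Set.Icc a b,
      deriv (fun s => p (s, ξ)) t =
        P1.mulVec (deriv (fun ζ => eq' t ζ) ξ) + P0.mulVec (eq' t ξ))
    (hpde_q : ∀ t : ℝ, ∀ ξ ∈ Set.Icc a b,
      deriv (fun s => q (s, ξ)) t =
        P1ᵀ.mulVec (deriv (fun ζ => ep t ζ) ξ) - P0ᵀ.mulVec (ep t ξ))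
    (H : ℝ → ℝ)
    (hH : ∀ t, H t = (1 / 2) *
      ∫ ξ in a..b,
        (p (t, ξ) ⬝ᵥ Qp.mulVec (p (t, ξ)) + q (t, ξ) ⬝ᵥ Qq.mulVec (q (t, ξ)))) :
    ∀ t, HasDerivAt H
      (ep t b ⬝ᵥ P1.mulVec (eq' t b) - ep t a ⬝ᵥ P1.mulVec (eq' t a)) t := by
  intro t
  set ρ : ℝ × ℝ → ℝ := fun x => 1 / 2 * (p x ⬝ᵥ Qp *ᵥ p x + q x ⬝ᵥ Qq *ᵥ q x)
  have hρ : ContDiff ℝ 1 ρ := contDiff_const.mul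
    ((hp.dotProduct (hp.matrix_mulVec Qp)).add (hq.dotProduct (hq.matrix_mulVec Qq)))
  have hHρ : H = fun s => ∫ ξ in a..b, ρ (s, ξ) :=
    funext fun s => by rw [hH, intervalIntegral.integral_const_mul]
  rw [hHρ]
  refine hasDerivAt_intervalIntegral_of_conservationLaw hρ
    (Φ := fun ξ => ep t ξ ⬝ᵥ P1 *ᵥ eq' t ξ) fun ξ hξ => ?_
  rw [Set.uIcc_of_le hab.le] at hξ
  have hpt := (hp.differentiable_comp_prodMk_left ξ t).hasDerivAt
  have hqt := (hq.differentiable_comp_prodMk_left ξ t).hasDerivAt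
  have hρt : deriv (fun s => ρ (s, ξ)) t =
      ep t ξ ⬝ᵥ deriv (fun s => p (s, ξ)) t + eq' t ξ ⬝ᵥ deriv (fun s => q (s, ξ)) t := by
    have h : HasDerivAt (fun s => ρ (s, ξ)) (1 / 2 * (2 * (Qp *ᵥ p (t, ξ) ⬝ᵥ deriv
        (fun s => p (s, ξ)) t) + 2 * (Qq *ᵥ q (t, ξ) ⬝ᵥ deriv (fun s => q (s, ξ)) t))) t :=
      ((hpt.dotProduct_mulVec_self hQp).add (hqt.dotProduct_mulVec_self hQq)).const_mul _
    rw [h.deriv, hep, heq]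
    ring
  have hepξ : HasDerivAt (ep t) (deriv (ep t) ξ) ξ := by
    rw [show ep t = fun ζ => Qp *ᵥ p (t, ζ) from funext (hep t)]
    exact ((hp.matrix_mulVec Qp).differentiable_comp_prodMk_right t ξ).hasDerivAt
  have heqξ : HasDerivAt (eq' t) (deriv (eq' t) ξ) ξ := by
    rw [show eq' t = fun ζ => Qq *ᵥ q (t, ζ) from funext (heq t)]
    exact ((hq.matrix_mulVec Qq).differentiable_comp_prodMk_right t ξ).hasDerivAt
  rw [hρt, hpde_p t ξ hξ, hpde_q t ξ hξ, portHamiltonian_power_identity]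
  exact hepξ.dotProduct (heqξ.matrix_mulVec P1)
end
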